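/- Let {e_k}_{k≥1} be a complete orthonormal basis of X and, for N ∈ ℕ, let P_N u = Σ_{k=1}^N ⟨u, e_k⟩ e_k. Assume: (a) ∫_X ‖u‖_X² dμ₀(u) < ∞; (b) μ₀({u : ‖u‖_X < r}) > 0 for every r > 0; (c) Φ, R : X → [0,∞) are Borel measurable with Φ(0) < ∞, R(0) < ∞, and for every r > 0 there exists L(r) > 0 such that |Φ(u) − Φ(v)| + |R(u) − R(v)| ≤ L(r) ‖u − v‖_X whenever ‖u‖_X, ‖v‖_X ≤ r. Define μ by dμ/dμ₀ = Z^{−1} exp(−Φ(u) − R(u)) with Z = ∫_X exp(−Φ(u) − R(u)) dμ₀(u), and for each N define μ_N by dμ_N/dμ₀ = Z_N^{−1} exp(−Φ(P_N u) − R(P_N u)) with Z_N = ∫_X exp(−Φ(P_N u) − R(P_N u)) dμ₀(u). Then d_Hell(μ, μ_N) → 0 as N → ∞. -/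

import Mathlib

open Filter


open MeasureTheory

/-- Normalization constant `Z = ∫_X exp(−F(u)) dμ₀(u)` for a potential `F`. -/
noncomputable def ZConst {X : Type*} [MeasurableSpace X] (μ₀ : Measure X) (F : X → ℝ) : ℝ :=
  ∫ u, Real.exp (-F u) ∂μ₀

/-- Density of the posterior measure with respect to `μ₀`: `Z⁻¹ exp(−F)`. -/
noncomputable def postDens {X : Type*} [MeasurableSpace X] (μ₀ : Measure X) (F : X → ℝ) :
    X → ℝ :=
  fun u => (ZConst μ₀ F)⁻¹ * Real.exp (-F u)

/-- Hellinger distance between two measures given by their densities `f = dμ/dμ₀`,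
`g = dμ'/dμ₀` with respect to `μ₀`:
`d_Hell = (½ ∫ (√f − √g)² dμ₀)^{1/2}`. -/
noncomputable def hellingerDist {X : Type*} [MeasurableSpace X] (μ₀ : Measure X)
    (f g : X → ℝ) : ℝ :=
  Real.sqrt ((1 / 2) * ∫ u, (Real.sqrt (f u) - Real.sqrt (g u)) ^ 2 ∂μ₀)

lemma exp_neg_integrable {X : Type*} [MeasurableSpace X] (μ₀ : Measure X)
    [IsProbabilityMeasure μ₀] (G : X → ℝ) (hG : Measurable G) (hG0 : ∀ u, 0 ≤ G u) :
    Integrable (fun u => Real.exp (-G u)) μ₀ := by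
  refine (integrable_const (1 : ℝ)).mono' ?_ ?_
  · exact (Real.measurable_exp.comp hG.neg).aestronglyMeasurable
  · refine Filter.Eventually.of_forall fun u => ?_
    rw [Real.norm_eq_abs, abs_of_pos (Real.exp_pos _)]
    exact Real.exp_le_one_iff.2 (neg_nonpos.2 (hG0 u))

lemma ZConst_pos {X : Type*} [MeasurableSpace X] (μ₀ : Measure X)
    [IsProbabilityMeasure μ₀] (G : X → ℝ) (hG : Measurable G) (hG0 : ∀ u, 0 ≤ G u) :
    0 < ZConst μ₀ G := by
  rw [ZConst, integral_pos_iff_support_of_nonneg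
    (fun u => (Real.exp_pos _).le) (exp_neg_integrable μ₀ G hG hG0)]
  have : Function.support (fun u : X => Real.exp (-G u)) = Set.univ :=
    Set.eq_univ_of_forall fun u => (Real.exp_pos _).ne'
  rw [this]
  simp

/-- convergence of the spectral (finite-dimensional projection)
approximation of the posterior measure: `d_Hell(μ, μ_N) → 0` as `N → ∞`, where
`μ_N` is obtained by evaluating the potentials at `P_N u = Σ_{k<N} ⟨u, e_k⟩ e_k`. -/
theorem posterior_projection_approximation_convergence
    {X : Type*} [NormedAddCommGroup X] [InnerProductSpace ℝ X] [CompleteSpace X]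
    [TopologicalSpace.SeparableSpace X] [MeasurableSpace X] [BorelSpace X]
    (μ₀ : Measure X) [IsProbabilityMeasure μ₀]
    (e : ℕ → X) (he : Orthonormal ℝ e)
    (hecomplete : (Submodule.span ℝ (Set.range e)).topologicalClosure = ⊤)
    (ha : Integrable (fun u : X => ‖u‖ ^ 2) μ₀)
    (hb : ∀ r > (0 : ℝ), 0 < μ₀ {u : X | ‖u‖ < r})
    (Φ R : X → ℝ) (hΦm : Measurable Φ) (hRm : Measurable R)
    (hΦ0 : ∀ u, 0 ≤ Φ u) (hR0 : ∀ u, 0 ≤ R u)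
    (hLip : ∀ r > (0 : ℝ), ∃ L > (0 : ℝ), ∀ u v : X, ‖u‖ ≤ r → ‖v‖ ≤ r →
      |Φ u - Φ v| + |R u - R v| ≤ L * ‖u - v‖) :
    Filter.Tendsto
      (fun N : ℕ =>
        hellingerDist μ₀ (postDens μ₀ (fun u => Φ u + R u))
          (postDens μ₀ (fun u =>
            Φ (∑ k ∈ Finset.range N, (inner ℝ u (e k) : ℝ) • e k) +
            R (∑ k ∈ Finset.range N, (inner ℝ u (e k) : ℝ) • e k))))
      Filter.atTop (nhds 0) := by
  classical
  set P : ℕ → X → X := fun N u => ∑ k ∈ Finset.range N, (inner ℝ u (e k) : ℝ) • e k with hPdef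
  set F : X → ℝ := fun u => Φ u + R u with hFdef
  set FN : ℕ → X → ℝ := fun N u => F (P N u) with hFNdef
  -- convergence of projections
  have hPtend : ∀ u : X, Tendsto (fun N => P N u) atTop (nhds u) := by
    intro u
    have hsp : ⊤ ≤ (Submodule.span ℝ (Set.range e)).topologicalClosure := hecomplete.ge
    have hbk := fun i => congrFun (HilbertBasis.coe_mk he hsp) i
    have h := ((HilbertBasis.mk he hsp).hasSum_repr u).tendsto_sum_nat
    refine h.congr fun N => Finset.sum_congr rfl fun k _ => ?_
    simp only [HilbertBasis.repr_apply_apply, hbk, real_inner_comm]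
  -- continuity / measurability of P N
  have hPcont : ∀ N, Continuous (P N) := by
    intro N
    exact continuous_finset_sum _ fun k _ =>
      (continuous_id.inner continuous_const).smul continuous_const
  have hFm : Measurable F := hΦm.add hRm
  have hF0 : ∀ u, 0 ≤ F u := fun u => add_nonneg (hΦ0 u) (hR0 u)
  have hFNm : ∀ N, Measurable (FN N) := fun N => hFm.comp (hPcont N).measurable
  have hFN0 : ∀ N u, 0 ≤ FN N u := fun N u => hF0 _
  -- pointwise convergence of potentials
  have hFtend : ∀ u : X, Tendsto (fun N => FN N u) atTop (nhds (F u)) := by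
    intro u
    obtain ⟨L, hL, hLr⟩ := hLip (‖u‖ + 1) (by positivity)
    rw [tendsto_iff_dist_tendsto_zero]
    have hnear : ∀ᶠ N in atTop, ‖P N u‖ < ‖u‖ + 1 :=
      ((hPtend u).norm).eventually_lt_const (by linarith)
    have hnorm0 : Tendsto (fun N => L * ‖P N u - u‖) atTop (nhds 0) := by
      have h1 : Tendsto (fun N => P N u - u) atTop (nhds 0) := by
        simpa using (hPtend u).sub (tendsto_const_nhds (x := u))
      have := (h1.norm).const_mul L
      simpa using this
    refine squeeze_zero' (Filter.Eventually.of_forall fun N => dist_nonneg) ?_ hnorm0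
    filter_upwards [hnear] with N hN
    have h2 := hLr (P N u) u hN.le (by linarith)
    have h3 : dist (FN N u) (F u) = |Φ (P N u) + R (P N u) - (Φ u + R u)| := by
      rw [Real.dist_eq]
    have h4 : |Φ (P N u) + R (P N u) - (Φ u + R u)| ≤ |Φ (P N u) - Φ u| + |R (P N u) - R u| := by
      have : Φ (P N u) + R (P N u) - (Φ u + R u) = (Φ (P N u) - Φ u) + (R (P N u) - R u) := by ring
      rw [this]; exact abs_add_le _ _
    calc dist (FN N u) (F u) ≤ |Φ (P N u) - Φ u| + |R (P N u) - R u| := by rw [h3]; exact h4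
      _ ≤ L * ‖P N u - u‖ := h2
  -- normalization constants
  set Z : ℝ := ZConst μ₀ F with hZdef
  set ZN : ℕ → ℝ := fun N => ZConst μ₀ (FN N) with hZNdef
  have hZpos : 0 < Z := ZConst_pos μ₀ F hFm hF0
  have hZNpos : ∀ N, 0 < ZN N := fun N => ZConst_pos μ₀ (FN N) (hFNm N) (hFN0 N)
  have hexple : ∀ (c : ℝ), 0 ≤ c → |Real.exp (-c)| ≤ 1 := fun c hc => by
    rw [abs_of_pos (Real.exp_pos _)]
    exact Real.exp_le_one_iff.2 (neg_nonpos.2 hc)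
  -- Z_N → Z by dominated convergence
  have hZtend : Tendsto ZN atTop (nhds Z) := by
    rw [hZNdef, hZdef]
    simp only [ZConst]
    refine tendsto_integral_filter_of_dominated_convergence (fun _ => (1 : ℝ))
      (Filter.Eventually.of_forall fun N =>
        (Real.measurable_exp.comp (hFNm N).neg).aestronglyMeasurable)
      (Filter.Eventually.of_forall fun N => Filter.Eventually.of_forall fun u => ?_)
      (integrable_const 1)
      (Filter.Eventually.of_forall fun u =>
        (Real.continuous_exp.tendsto _).comp (hFtend u).neg)
    rw [Real.norm_eq_abs]
    exact hexple _ (hFN0 N u)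
  have hZhalf : ∀ᶠ N in atTop, Z / 2 < ZN N :=
    hZtend.eventually_const_lt (by linarith)
  -- the Hellinger integral tends to zero
  have hsqm : ∀ (G : X → ℝ), Measurable G →
      Measurable (fun u => Real.sqrt ((ZConst μ₀ G)⁻¹ * Real.exp (-G u))) := by
    intro G hG
    exact (measurable_const.mul (Real.measurable_exp.comp hG.neg)).sqrt
  have hItend : Tendsto (fun N => ∫ u,
      (Real.sqrt (Z⁻¹ * Real.exp (-F u)) - Real.sqrt ((ZN N)⁻¹ * Real.exp (-FN N u))) ^ 2 ∂μ₀)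
      atTop (nhds 0) := by
    have h0 : (0 : ℝ) = ∫ (_ : X), (0 : ℝ) ∂μ₀ := by simp
    rw [h0]
    refine tendsto_integral_filter_of_dominated_convergence (fun _ => 6 * Z⁻¹)
      ?_ ?_ (integrable_const _) ?_
    · refine Filter.Eventually.of_forall fun N => ?_
      exact (((hsqm F hFm).sub (hsqm (FN N) (hFNm N))).pow measurable_const).aestronglyMeasurable
    · filter_upwards [hZhalf] with N hN
      refine Filter.Eventually.of_forall fun u => ?_
      set a := Real.sqrt (Z⁻¹ * Real.exp (-F u)) with hadef
      set c := Real.sqrt ((ZN N)⁻¹ * Real.exp (-FN N u)) with hcdef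
      have ha2 : a ^ 2 = Z⁻¹ * Real.exp (-F u) :=
        Real.sq_sqrt (by positivity)
      have hc2 : c ^ 2 = (ZN N)⁻¹ * Real.exp (-FN N u) :=
        Real.sq_sqrt (mul_nonneg (inv_nonneg.2 (hZNpos N).le) (Real.exp_pos _).le)
      have hea : Real.exp (-F u) ≤ 1 := Real.exp_le_one_iff.2 (neg_nonpos.2 (hF0 u))
      have hec : Real.exp (-FN N u) ≤ 1 := Real.exp_le_one_iff.2 (neg_nonpos.2 (hFN0 N u))
      have hZinv : (ZN N)⁻¹ ≤ 2 * Z⁻¹ := by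
        rw [show (2 : ℝ) * Z⁻¹ = (Z / 2)⁻¹ by field_simp]
        exact inv_anti₀ (by linarith) hN.le
      have ha2le : a ^ 2 ≤ Z⁻¹ := by
        rw [ha2]
        calc Z⁻¹ * Real.exp (-F u) ≤ Z⁻¹ * 1 := by
              exact mul_le_mul_of_nonneg_left hea (by positivity)
          _ = Z⁻¹ := mul_one _
      have hc2le : c ^ 2 ≤ 2 * Z⁻¹ := by
        rw [hc2]
        calc (ZN N)⁻¹ * Real.exp (-FN N u) ≤ (ZN N)⁻¹ * 1 :=
              mul_le_mul_of_nonneg_left hec (inv_nonneg.2 (hZNpos N).le)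
          _ = (ZN N)⁻¹ := mul_one _
          _ ≤ 2 * Z⁻¹ := hZinv
      rw [Real.norm_eq_abs, abs_of_nonneg (sq_nonneg _)]
      nlinarith [sq_nonneg (a + c)]
    · refine Filter.Eventually.of_forall fun u => ?_
      have h1 : Tendsto (fun N => (ZN N)⁻¹ * Real.exp (-FN N u)) atTop
          (nhds (Z⁻¹ * Real.exp (-F u))) :=
        (hZtend.inv₀ hZpos.ne').mul ((Real.continuous_exp.tendsto _).comp (hFtend u).neg)
      have h2 : Tendsto (fun N => Real.sqrt ((ZN N)⁻¹ * Real.exp (-FN N u))) atTop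
          (nhds (Real.sqrt (Z⁻¹ * Real.exp (-F u)))) :=
        (Real.continuous_sqrt.tendsto _).comp h1
      have h3 := (tendsto_const_nhds (x := Real.sqrt (Z⁻¹ * Real.exp (-F u)))
        (f := atTop (α := ℕ))).sub h2
      rw [sub_self] at h3
      simpa using h3.pow 2
  -- conclude
  have hhalf : Tendsto (fun N => (1 / 2 : ℝ) * ∫ u,
      (Real.sqrt (Z⁻¹ * Real.exp (-F u)) - Real.sqrt ((ZN N)⁻¹ * Real.exp (-FN N u))) ^ 2 ∂μ₀)
      atTop (nhds 0) := by
    simpa using hItend.const_mul (1 / 2 : ℝ)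
  have hfin := (Real.continuous_sqrt.tendsto 0).comp hhalf
  rw [Real.sqrt_zero] at hfin
  exact hfin
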